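/- Let r ≥ 1 and let E_1, …, E_r each be one-dimensional complex vector spaces, so V = ∏_{i=1}^{r-1} Hom_ℂ(E_i, E_{i+1}) and V* = ∏_{i=1}^{r-1} Hom_ℂ(E_{i+1}, E_i) are each isomorphic to ℂ^{r-1}, and H = ∏_{i=1}^{r} GL(E_i) acts on V by (h·x)_i = h_{i+1} ∘ x_i ∘ h_i^{-1} and on V* by (h·y)_i = h_i ∘ y_i ∘ h_{i+1}^{-1}. Let y ∈ V* have y_i ≠ 0 for every i = 1, …, r−1. Then the point (0, y) ∈ V × V* satisfies: (0, y) lies in Λ_{C_0}, where C_0 = {0} is the zero H-orbit of V and Λ_{C_0} = {(x', y') ∈ C_0 × V* : (x', y') commuting} = {0} × V*; but for every H-orbit C' of V with C' ≠ {0}, the point (0, y) does NOT lie in the Zariski closure of Λ_{C'} = {(x', y') ∈ C' × V* : (x', y') commuting}. Consequently (0, y) lies in the regular part Λ_{C_0}^{reg} of the conormal variety of the zero orbit. -/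

import Mathlib

open LinearMap

/-- The Vogan variety `V = ∏_{i=1}^{r-1} Hom_ℂ(E_i, E_{i+1})` attached to a family of
complex vector spaces `E_1, …, E_r` (indexed here by `Fin (n+1)`, so `r = n + 1 ≥ 1`). -/
abbrev Vog (n : ℕ) (E : Fin (n + 1) → Type) [∀ i, AddCommGroup (E i)]
    [∀ i, Module ℂ (E i)] : Type :=
  ∀ i : Fin n, E i.castSucc →ₗ[ℂ] E i.succ

/-- The dual Vogan variety `V* = ∏_{i=1}^{r-1} Hom_ℂ(E_{i+1}, E_i)`. -/
abbrev VogD (n : ℕ) (E : Fin (n + 1) → Type) [∀ i, AddCommGroup (E i)]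
    [∀ i, Module ℂ (E i)] : Type :=
  ∀ i : Fin n, E i.succ →ₗ[ℂ] E i.castSucc

variable {n : ℕ}

section defs
variable {E : Fin (n + 1) → Type} [∀ i, AddCommGroup (E i)] [∀ i, Module ℂ (E i)]

/-- The action of `H = ∏_{i=1}^r GL(E_i)` on `V`: `(h·x)_i = h_{i+1} ∘ x_i ∘ h_i⁻¹`. -/
def Vact (h : ∀ i, E i ≃ₗ[ℂ] E i) (x : Vog n E) : Vog n E :=
  fun i => (h i.succ).toLinearMap ∘ₗ x i ∘ₗ (h i.castSucc).symm.toLinearMap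

/-- The action of `H` on `V*`: `(h·y)_i = h_i ∘ y_i ∘ h_{i+1}⁻¹`. -/
def VactD (h : ∀ i, E i ≃ₗ[ℂ] E i) (y : VogD n E) : VogD n E :=
  fun i => (h i.castSucc).toLinearMap ∘ₗ y i ∘ₗ (h i.succ).symm.toLinearMap

/-- `C ⊆ V` is an `H`-orbit. -/
def IsOrbit (C : Set (Vog n E)) : Prop :=
  ∃ x₀ : Vog n E, C = {x | ∃ h : ∀ i, E i ≃ₗ[ℂ] E i, x = Vact h x₀}

/-- The commuting (conormal) condition `[x, y] = 0`, expressed blockwise: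
`x_{i-1} ∘ y_{i-1} = y_i ∘ x_i` on `E_i` for `i = 1, …, r`, with the boundary
conventions `x_0 = y_0 = x_r = y_r = 0`. -/
def IsConormal (x : Vog n E) (y : VogD n E) : Prop :=
  ∀ j : Fin (n + 1),
    Fin.cases (motive := fun j => E j →ₗ[ℂ] E j) 0 (fun i => x i ∘ₗ y i) j
      = Fin.lastCases (motive := fun j => E j →ₗ[ℂ] E j) 0 (fun i => y i ∘ₗ x i) j

/-- The conormal variety `Λ_C = {(x, y) ∈ C × V* : [x,y] = 0}` over a subset `C ⊆ V`. -/
def Lam (C : Set (Vog n E)) : Set (Vog n E × VogD n E) :=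
  {p | p.1 ∈ C ∧ IsConormal p.1 p.2}

end defs

section prodDefs
variable {F G : Fin (n + 1) → Type}
  [∀ i, AddCommGroup (F i)] [∀ i, Module ℂ (F i)]
  [∀ i, AddCommGroup (G i)] [∀ i, Module ℂ (G i)]

/-- The block-diagonal embedding `ε : V_F × V_G → V`. -/
def eps (u : Vog n F × Vog n G) : Vog n (fun i => F i × G i) :=
  fun i => (u.1 i).prodMap (u.2 i)

/-- The block-diagonal embedding `ᵗε : V_F* × V_G* → V*`. -/
def epsD (w : VogD n F × VogD n G) : VogD n (fun i => F i × G i) :=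
  fun i => (w.1 i).prodMap (w.2 i)

/-- `C' ⊆ V_F × V_G` is an `(H_F × H_G)`-orbit. -/
def IsOrbit2 (C' : Set (Vog n F × Vog n G)) : Prop :=
  ∃ u₀ : Vog n F × Vog n G,
    C' = {u | ∃ (hF : ∀ i, F i ≃ₗ[ℂ] F i) (hG : ∀ i, G i ≃ₗ[ℂ] G i),
      u = (Vact hF u₀.1, Vact hG u₀.2)}

/-- The Zariski closure of a subset `S` of a complex vector space `M`: the zero locus of
the set of all polynomial functions on `M` (the subalgebra of `M → ℂ` generated by the
linear functionals) vanishing on `S`. -/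
def Zcl {M : Type} [AddCommGroup M] [Module ℂ M] (S : Set M) : Set M :=
  {x | ∀ p : M → ℂ,
    p ∈ Algebra.adjoin ℂ (Set.range fun l : M →ₗ[ℂ] ℂ => (l : M → ℂ)) →
    (∀ s ∈ S, p s = 0) → p x = 0}

section reg
variable {E : Fin (n + 1) → Type} [∀ i, AddCommGroup (E i)] [∀ i, Module ℂ (E i)]

/-- The regular part `Λ_C^{reg} = Λ_C \ ⋃_{C'} Zcl(Λ_{C'})`, the union being over all
`H`-orbits `C'` of `V` with `C ⊆ Zcl(C')` and `C' ≠ C`. -/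
def RegPart (C : Set (Vog n E)) : Set (Vog n E × VogD n E) :=
  {p | p ∈ Lam C ∧
    ∀ C' : Set (Vog n E), IsOrbit C' → C ⊆ Zcl C' → C' ≠ C → p ∉ Zcl (Lam C')}

end reg


section aux
variable {A B : Type} [AddCommGroup A] [Module ℂ A] [AddCommGroup B] [Module ℂ B]

lemma aux_surj [FiniteDimensional ℂ B] (hB : Module.finrank ℂ B = 1)
    (g : A →ₗ[ℂ] B) (hg : g ≠ 0) : Function.Surjective g := by
  rw [← LinearMap.range_eq_top]
  by_contra hne
  have hlt : Module.finrank ℂ (LinearMap.range g) < Module.finrank ℂ B :=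
    Submodule.finrank_lt hne
  rw [hB, Nat.lt_one_iff, Submodule.finrank_eq_zero, LinearMap.range_eq_bot] at hlt
  exact hg hlt

lemma aux_swap [FiniteDimensional ℂ B] (hB : Module.finrank ℂ B = 1)
    (g : A →ₗ[ℂ] B) (f : B →ₗ[ℂ] A) (hfg : f ∘ₗ g = 0) : g ∘ₗ f = 0 := by
  rcases eq_or_ne g 0 with rfl | hg
  · simp
  · have hf : f = 0 := by
      ext b
      obtain ⟨a, rfl⟩ := aux_surj hB g hg b
      exact LinearMap.congr_fun hfg a
    rw [hf, LinearMap.comp_zero]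

end aux

/-- For one-dimensional `E_i` and `y ∈ V*` with all components nonzero:
`C_0 = {0}` is the zero `H`-orbit, `Λ_{C_0} = {0} × V*`, the point `(0, y)` lies in
`Λ_{C_0}`, it does not lie in the Zariski closure of `Λ_{C'}` for any `H`-orbit
`C' ≠ {0}`, and consequently it lies in the regular part `Λ_{C_0}^{reg}`. -/
theorem stmt_8 (n : ℕ) (E : Fin (n + 1) → Type)
    [∀ i, AddCommGroup (E i)] [∀ i, Module ℂ (E i)] [∀ i, FiniteDimensional ℂ (E i)]
    (hE : ∀ i, Module.finrank ℂ (E i) = 1)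
    (y : VogD n E) (hy : ∀ i, y i ≠ 0) :
    IsOrbit ({0} : Set (Vog n E)) ∧
    Lam ({0} : Set (Vog n E)) = {p : Vog n E × VogD n E | p.1 = 0} ∧
    ((0 : Vog n E), y) ∈ Lam ({0} : Set (Vog n E)) ∧
    (∀ C' : Set (Vog n E), IsOrbit C' → C' ≠ ({0} : Set (Vog n E)) →
      ((0 : Vog n E), y) ∉ Zcl (Lam C')) ∧
    ((0 : Vog n E), y) ∈ RegPart ({0} : Set (Vog n E)) := by
  classical
  -- Part 1: {0} is an orbit
  have hzero_act : ∀ h : ∀ i, E i ≃ₗ[ℂ] E i, Vact h (0 : Vog n E) = 0 := by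
    intro h; funext i; simp [Vact]
  have horb : IsOrbit ({0} : Set (Vog n E)) := by
    refine ⟨0, ?_⟩
    ext x
    simp only [Set.mem_singleton_iff, Set.mem_setOf_eq]
    constructor
    · rintro rfl
      exact ⟨fun i => LinearEquiv.refl ℂ (E i), (hzero_act _).symm⟩
    · rintro ⟨h, rfl⟩
      exact hzero_act h
  -- Part 2: Lam {0} = {p | p.1 = 0}
  have hLam : Lam ({0} : Set (Vog n E)) = {p : Vog n E × VogD n E | p.1 = 0} := by
    ext p
    constructor
    · rintro ⟨h1, -⟩; exact h1
    · intro h1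
      have h1' : p.1 = 0 := h1
      refine ⟨h1, fun j => ?_⟩
      have hL : Fin.cases (motive := fun j => E j →ₗ[ℂ] E j) 0
          (fun i => p.1 i ∘ₗ p.2 i) j = 0 := by
        induction j using Fin.cases with
        | zero => simp
        | succ i => simp [h1']
      have hR : Fin.lastCases (motive := fun j => E j →ₗ[ℂ] E j) 0
          (fun i => p.2 i ∘ₗ p.1 i) j = 0 := by
        induction j using Fin.lastCases with
        | last => simp
        | cast i => simp [h1']
      rw [hL, hR]
  have hmem : ((0 : Vog n E), y) ∈ Lam ({0} : Set (Vog n E)) := by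
    rw [hLam]; rfl
  -- Part 4: main nondegeneracy
  have key : ∀ C' : Set (Vog n E), IsOrbit C' → C' ≠ ({0} : Set (Vog n E)) →
      ((0 : Vog n E), y) ∉ Zcl (Lam C') := by
    rintro C' ⟨x₀, rfl⟩ hne hzcl
    have hx₀ : x₀ ≠ 0 := by
      rintro rfl
      apply hne
      ext x
      simp only [Set.mem_setOf_eq, Set.mem_singleton_iff]
      constructor
      · rintro ⟨h, rfl⟩; exact hzero_act h
      · rintro rfl
        exact ⟨fun i => LinearEquiv.refl ℂ (E i), (hzero_act _).symm⟩
    obtain ⟨i₀, hi₀⟩ : ∃ i, x₀ i ≠ 0 := by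
      by_contra hcon
      push_neg at hcon
      exact hx₀ (funext hcon)
    -- every point of the conormal variety has vanishing y-component at i₀
    have hvan : ∀ p ∈ Lam {x | ∃ h : ∀ i, E i ≃ₗ[ℂ] E i, x = Vact h x₀}, p.2 i₀ = 0 := by
      rintro ⟨x', y'⟩ ⟨⟨h, rfl⟩, hc⟩
      have hxne : ∀ i, x₀ i ≠ 0 → Vact h x₀ i ≠ 0 := by
        intro i hi h0
        apply hi
        ext v
        have := LinearMap.congr_fun h0 ((h i.castSucc) v)
        simpa [Vact] using this
      have main : ∀ k (hk : k < n),
          y' ⟨k, hk⟩ ∘ₗ Vact h x₀ ⟨k, hk⟩ = 0 := by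
        intro k
        induction k with
        | zero =>
          intro hk
          have h0 := hc ((⟨0, hk⟩ : Fin n).castSucc)
          rw [Fin.lastCases_castSucc] at h0
          have h0' : (0 : E (Fin.castSucc ⟨0, hk⟩) →ₗ[ℂ] E (Fin.castSucc ⟨0, hk⟩))
              = y' ⟨0, hk⟩ ∘ₗ Vact h x₀ ⟨0, hk⟩ := h0
          exact h0'.symm
        | succ k ih =>
          intro hk
          have hk' : k < n := Nat.lt_of_succ_lt hk
          have gk : Vact h x₀ ⟨k, hk'⟩ ∘ₗ y' ⟨k, hk'⟩ = 0 :=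
            aux_swap (hE _) _ _ (ih hk')
          have h1 := hc ((⟨k+1, hk⟩ : Fin n).castSucc)
          rw [Fin.lastCases_castSucc] at h1
          have h1' : Vact h x₀ ⟨k, hk'⟩ ∘ₗ y' ⟨k, hk'⟩
              = y' ⟨k+1, hk⟩ ∘ₗ Vact h x₀ ⟨k+1, hk⟩ := h1
          rw [gk] at h1'
          exact h1'.symm
      have fk₀ : y' i₀ ∘ₗ Vact h x₀ i₀ = 0 := by
        have := main i₀.1 i₀.2
        simpa using this
      ext b
      obtain ⟨a, rfl⟩ := aux_surj (hE _) _ (hxne i₀ hi₀) b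
      exact LinearMap.congr_fun fk₀ a
    obtain ⟨l, hl⟩ : ∃ l : Module.Dual ℂ (E i₀.succ →ₗ[ℂ] E i₀.castSucc), l (y i₀) ≠ 0 := by
      by_contra hcon
      push_neg at hcon
      exact hy i₀ ((Module.forall_dual_apply_eq_zero_iff ℂ _).mp hcon)
    set L : (Vog n E × VogD n E) →ₗ[ℂ] ℂ :=
      l ∘ₗ (LinearMap.proj i₀) ∘ₗ (LinearMap.snd ℂ (Vog n E) (VogD n E)) with hLdef
    have hvanL : ∀ s ∈ Lam {x | ∃ h : ∀ i, E i ≃ₗ[ℂ] E i, x = Vact h x₀}, (⇑L) s = 0 := by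
      intro s hs
      have := hvan s hs
      simp [hLdef, this]
    have := hzcl (⇑L) (Algebra.subset_adjoin ⟨L, rfl⟩) hvanL
    simp only [hLdef, LinearMap.coe_comp, Function.comp_apply, LinearMap.snd_apply,
      LinearMap.proj_apply] at this
    exact hl this
  refine ⟨horb, hLam, hmem, key, hmem, ?_⟩
  intro C' hC' _ hne
  exact key C' hC' hne
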